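/- For every P in R_J (a real trigonometric polynomial of degree at most 2J with values in [0,1]), there exists a positive semidefinite (2J+1)×(2J+1) matrix E_+ such that P(θ) = ⟨ψ| U_θ† E_+ U_θ |ψ⟩ for all θ, where |ψ⟩ = (2J+1)^{-1/2} Σ_{j=-J}^{J} |j⟩ and U_θ|j⟩ = e^{ijθ}|j⟩. Moreover, E_+ can be chosen of rank one: E_+ = (2J+1)|b⟩⟨b| for some vector |b⟩. -/

import Mathlib

open Matrix Real Complex Finset
open scoped ComplexOrder

/-- `p` is a real trigonometric polynomial of degree at most `N`. -/
def IsTrigPolyDeg (N : ℕ) (p : ℝ → ℝ) : Prop :=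
  ∃ a b : ℕ → ℝ, ∀ θ : ℝ,
    p θ = a 0 + ∑ k ∈ Finset.Icc 1 N,
      (a k * Real.cos ((k : ℝ) * θ) + b k * Real.sin ((k : ℝ) * θ))

/-- The diagonal unitary `U_θ` on `ℂ^{N+1}` with `U_θ |j⟩ = e^{ijθ} |j⟩`, where the basis
vector of index `k : Fin (N+1)` corresponds to `j = k - N/2 ∈ {-J, …, J}` (with `N = 2J`). -/
noncomputable def Urot (N : ℕ) (θ : ℝ) : Matrix (Fin (N + 1)) (Fin (N + 1)) ℂ :=
  Matrix.diagonal fun k => Complex.exp (Complex.I * (((k : ℝ) - (N : ℝ) / 2 : ℝ) : ℂ) * (θ : ℂ))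

/-- The uniform superposition `|ψ⟩ = (2J+1)^{-1/2} Σ_j |j⟩` on `ℂ^{N+1}`, `N = 2J`. -/
noncomputable def psiUnif (N : ℕ) : Fin (N + 1) → ℂ :=
  fun _ => ((1 / Real.sqrt (N + 1) : ℝ) : ℂ)

/-!
With `z = e^{iθ}`, a trigonometric polynomial of degree `≤ N` is `z^(-N) L(z)` for a polynomial `L`
of degree `≤ 2N`. Where this is real, `L` is self-inversive: `L(z) = z^(2N) conj (L (conj z⁻¹))`.
Hence its nonzero roots come in pairs `w, (conj w)⁻¹`, and a root on the unit circle is a minimum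
of the nonnegative function, hence a double root. On the circle
`(z - w) (z - (conj w)⁻¹) = -(conj w)⁻¹ z |z - w|²`, so splitting off such a pair (or a factor `z`
when `L(0) = 0`) lowers `N` by one; induction gives the Fejér–Riesz factorization
`P(θ) = |q(e^{iθ})|²` with `deg q ≤ N`. For `b = conj q` coefficientwise,
`⟨b| U_θ |ψ⟩ = e^{-iNθ/2} q(e^{iθ}) / √(N+1)`, so `E₊ = (N+1) |b⟩⟨b|` works.
-/

open Polynomial ComplexConjugate

lemma Polynomial.eval_reflect {K : Type*} [Field K] {n : ℕ} {p : K[X]} (hp : p.natDegree ≤ n)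
    {z : K} (hz : z ≠ 0) : (reflect n p).eval z = z ^ n * p.eval z⁻¹ := by
  have : Invertible z⁻¹ := invertibleOfNonzero (inv_ne_zero hz)
  have h := eval₂_reflect_mul_pow (RingHom.id K) z⁻¹ n p hp
  simp only [invOf_eq_inv, inv_inv, eval₂_id] at h
  rw [← h, inv_pow, mul_comm, inv_mul_cancel_right₀ (pow_ne_zero n hz)]

lemma Polynomial.eq_zero_of_eval_exp_mul_I_eq_zero {p : ℂ[X]}
    (h : ∀ θ : ℝ, p.eval (cexp (θ * I)) = 0) : p = 0 := by
  refine p.eq_zero_of_infinite_isRoot (((Set.Ico_infinite two_pi_pos).image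
    (injOn_circleMap_of_abs_sub_le' (c := 0) one_ne_zero (by simp))).mono ?_)
  rintro _ ⟨θ, -, rfl⟩
  simpa [circleMap] using h θ

lemma conj_exp_ofReal_mul_I (θ : ℝ) : conj (cexp (θ * I)) = (cexp (θ * I))⁻¹ := by
  rw [← Complex.exp_conj, ← Complex.exp_neg]
  simp

lemma nonneg_of_forall_exp_mul_I_ne {f : ℝ → ℂ} (hf : Continuous f) {w : ℂ}
    (h : ∀ θ : ℝ, cexp (θ * I) ≠ w → 0 ≤ f θ) (θ : ℝ) : 0 ≤ f θ := by
  have hcount : {θ : ℝ | cexp (θ * I) = w}.Countable :=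
    ((Set.countable_singleton w).preimage_cexp.preimage (mul_left_injective₀ I_ne_zero)).preimage
      ofReal_injective
  have hclosed : IsClosed {θ | 0 ≤ f θ} := isClosed_le continuous_const hf
  exact hclosed.closure_subset_iff.mpr (fun θ hθ => h θ hθ)
    ((hcount.dense_compl ℝ).closure_eq ▸ Set.mem_univ θ)

/-- For `L.natDegree ≤ 2 * N`, the functions `circleTrig N L` are exactly the trigonometric
polynomials of degree `≤ N`. -/
noncomputable def circleTrig (N : ℕ) (L : ℂ[X]) (θ : ℝ) : ℂ :=
  L.eval (cexp (θ * I)) * (cexp (θ * I))⁻¹ ^ N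

lemma circleTrig_add (N : ℕ) (L₁ L₂ : ℂ[X]) (θ : ℝ) :
    circleTrig N (L₁ + L₂) θ = circleTrig N L₁ θ + circleTrig N L₂ θ := by
  simp only [circleTrig, eval_add, add_mul]

lemma circleTrig_sum {ι : Type*} (s : Finset ι) (N : ℕ) (L : ι → ℂ[X]) (θ : ℝ) :
    circleTrig N (∑ i ∈ s, L i) θ = ∑ i ∈ s, circleTrig N (L i) θ := by
  simp only [circleTrig, eval_finsetSum, sum_mul]

lemma circleTrig_C_mul_X_pow (N m : ℕ) (c : ℂ) (θ : ℝ) :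
    circleTrig N (C c * X ^ m) θ = c * cexp (((m - N : ℝ) * θ : ℝ) * I) := by
  rw [circleTrig, eval_mul, eval_C, eval_pow, eval_X, mul_assoc, ← Complex.exp_neg,
    ← Complex.exp_nat_mul, ← Complex.exp_nat_mul, ← Complex.exp_add]
  push_cast
  ring_nf

lemma circleTrig_X_mul (N : ℕ) (M : ℂ[X]) (θ : ℝ) :
    circleTrig (N + 1) (X * M) θ = circleTrig N M θ := by
  have hz : cexp (θ * I) ≠ 0 := Complex.exp_ne_zero _
  simp only [circleTrig, eval_mul, eval_X, pow_succ]
  linear_combination (M.eval (cexp (θ * I)) * (cexp (θ * I))⁻¹ ^ N) * mul_inv_cancel₀ hz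

lemma circleTrig_X_sub_C_mul_X_sub_C_mul {w : ℂ} (hw : w ≠ 0) (N : ℕ) (M : ℂ[X]) (θ : ℝ) :
    circleTrig (N + 1) ((X - C w) * (X - C (conj w)⁻¹) * M) θ =
      normSq (cexp (θ * I) - w) * circleTrig N (C (-(conj w)⁻¹) * M) θ := by
  have hz : cexp (θ * I) ≠ 0 := Complex.exp_ne_zero _
  have hw' : conj w ≠ 0 := (_root_.map_ne_zero _).mpr hw
  have hnormSq : (normSq (cexp (θ * I) - w) : ℂ) =
      (cexp (θ * I) - w) * ((cexp (θ * I))⁻¹ - conj w) := by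
    rw [← conj_exp_ofReal_mul_I, ← map_sub, mul_conj]
  simp only [circleTrig, eval_mul, eval_sub, eval_X, eval_C, hnormSq, pow_succ]
  linear_combination ((cexp (θ * I) - w) * M.eval (cexp (θ * I)) * (cexp (θ * I))⁻¹ ^ N) *
    (mul_inv_cancel₀ hz - mul_inv_cancel₀ hw')

lemma continuous_circleTrig (N : ℕ) (L : ℂ[X]) : Continuous (circleTrig N L) := by
  unfold circleTrig
  fun_prop (disch := exact fun _ => Complex.exp_ne_zero _)

lemma eq_reflect_map_conj_of_isSelfAdjoint_circleTrig {N : ℕ} {L : ℂ[X]}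
    (hdeg : L.natDegree ≤ 2 * N) (h : ∀ θ, IsSelfAdjoint (circleTrig N L θ)) :
    L = reflect (2 * N) (L.map (starRingEnd ℂ)) := by
  rw [← sub_eq_zero]
  refine eq_zero_of_eval_exp_mul_I_eq_zero fun θ => ?_
  set z := cexp (θ * I)
  have hz : z ≠ 0 := Complex.exp_ne_zero _
  have hself := (h θ).star_eq
  simp only [circleTrig, star_mul', star_pow, Complex.star_def, map_inv₀, conj_exp_ofReal_mul_I,
    inv_inv] at hself
  rw [eval_sub, eval_reflect (natDegree_map_le.trans hdeg) hz, ← conj_exp_ofReal_mul_I, eval_map,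
    eval₂_at_apply]
  have hinv : z⁻¹ ^ N * z ^ N = 1 := by rw [← mul_pow, inv_mul_cancel₀ hz, one_pow]
  linear_combination (-z ^ N) * hself - L.eval z * hinv

lemma coeff_two_mul_eq_conj_coeff_zero {N : ℕ} {L : ℂ[X]} (hdeg : L.natDegree ≤ 2 * N)
    (hL : ∀ θ, 0 ≤ circleTrig N L θ) : L.coeff (2 * N) = conj (L.coeff 0) := by
  have hsi := eq_reflect_map_conj_of_isSelfAdjoint_circleTrig hdeg fun θ => (hL θ).isSelfAdjoint
  conv_lhs => rw [hsi]
  rw [coeff_reflect, revAt_le le_rfl, Nat.sub_self, coeff_map]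

lemma Polynomial.IsRoot.derivative_of_circleTrig_nonneg {N : ℕ} {L : ℂ[X]}
    (hL : ∀ θ, 0 ≤ circleTrig N L θ) {θ₀ : ℝ} (h0 : L.IsRoot (cexp (θ₀ * I))) :
    L.derivative.IsRoot (cexp (θ₀ * I)) := by
  have hexp : HasDerivAt (fun θ : ℝ => cexp (θ * I)) (cexp (θ₀ * I) * I) θ₀ := by
    simpa using ((hasDerivAt_id θ₀).ofReal_comp.mul_const I).cexp
  have hweight : DifferentiableAt ℝ (fun θ : ℝ => (cexp (θ * I))⁻¹ ^ N) θ₀ := by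
    fun_prop (disch := exact Complex.exp_ne_zero _)
  set f' := L.derivative.eval (cexp (θ₀ * I)) * (cexp (θ₀ * I) * I) * (cexp (θ₀ * I))⁻¹ ^ N
  have hf : HasDerivAt (circleTrig N L) f' θ₀ :=
    (((L.hasDerivAt _).comp θ₀ hexp).mul hweight.hasDerivAt).congr_deriv
      (by rw [Function.comp_apply, h0.eq_zero, zero_mul, add_zero])
  have hre : HasDerivAt (fun θ => (circleTrig N L θ).re) f'.re θ₀ :=
    reCLM.hasFDerivAt.comp_hasDerivAt θ₀ hf
  have hmin : IsLocalMin (fun θ => (circleTrig N L θ).re) θ₀ := by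
    have hθ₀ : circleTrig N L θ₀ = 0 := by rw [circleTrig, h0.eq_zero, zero_mul]
    refine Filter.Eventually.of_forall fun θ => ?_
    simpa [hθ₀] using (Complex.le_def.mp (hL θ)).1
  have hreal : (fun θ => ((circleTrig N L θ).re : ℂ)) = circleTrig N L := by
    funext θ
    exact conj_eq_iff_re.mp (hL θ).isSelfAdjoint.star_eq
  have hf' : f' = 0 := by
    have := hre.ofReal_comp
    rw [hreal, hmin.hasDerivAt_eq_zero hre] at this
    simpa using hf.unique this
  simpa [f', Complex.exp_ne_zero, I_ne_zero] using hf'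

/-- The roots of a self-inversive polynomial come in pairs `w, (conj w)⁻¹`; when these coincide,
`w` lies on the unit circle, where `circleTrig` attains its minimum `0`, so `w` is a double root. -/
lemma X_sub_C_mul_X_sub_C_conj_inv_dvd {N : ℕ} {L : ℂ[X]} (hL0 : L ≠ 0) (hdeg : L.natDegree ≤ 2 * N)
    (hL : ∀ θ, 0 ≤ circleTrig N L θ) {w : ℂ} (hw : L.IsRoot w) (hw0 : w ≠ 0) :
    (X - C w) * (X - C (conj w)⁻¹) ∣ L := by
  have hcw : conj w ≠ 0 := (_root_.map_ne_zero _).mpr hw0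
  by_cases hvw : (conj w)⁻¹ = w
  · have hnorm : ‖w‖ = 1 := by
      have hsq : ‖w‖ ^ 2 = 1 := by
        rw [← normSq_eq_norm_sq, ← ofReal_inj, ← mul_conj]
        nth_rw 1 [← hvw]
        rw [inv_mul_cancel₀ hcw, ofReal_one]
      nlinarith [norm_nonneg w]
    have hexp : cexp (w.arg * I) = w := by
      simpa [hnorm] using norm_mul_exp_arg_mul_I w
    have hder := (hexp ▸ hw).derivative_of_circleTrig_nonneg hL
    rw [hexp] at hder
    rw [hvw, ← pow_two, ← le_rootMultiplicity_iff hL0]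
    exact (one_lt_rootMultiplicity_iff_isRoot hL0).mpr ⟨hw, hder⟩
  · have hsi := eq_reflect_map_conj_of_isSelfAdjoint_circleTrig hdeg fun θ => (hL θ).isSelfAdjoint
    have hconj : (L.map (starRingEnd ℂ)).eval (conj w) = conj (L.eval w) := by
      rw [eval_map, eval₂_at_apply]
    have hv : L.IsRoot (conj w)⁻¹ := by
      rw [IsRoot, hsi, eval_reflect (natDegree_map_le.trans hdeg) (inv_ne_zero hcw), inv_inv, hconj,
        hw.eq_zero, map_zero, mul_zero]
    exact (isCoprime_X_sub_C_of_isUnit_sub (sub_ne_zero.mpr (Ne.symm hvw)).isUnit).mul_dvd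
      (dvd_iff_isRoot.mpr hw) (dvd_iff_isRoot.mpr hv)

lemma natDegree_divX_le_of_coeff_zero_eq_zero {N : ℕ} {L : ℂ[X]}
    (hdeg : L.natDegree ≤ 2 * (N + 1)) (hL : ∀ θ, 0 ≤ circleTrig (N + 1) L θ)
    (h0 : L.coeff 0 = 0) : L.divX.natDegree ≤ 2 * N := by
  have htop : L.coeff (2 * (N + 1)) = 0 := by
    rw [coeff_two_mul_eq_conj_coeff_zero hdeg hL, h0, map_zero]
  have hlt : L.natDegree ≠ 2 * (N + 1) := fun h => by
    have : L = 0 := leadingCoeff_eq_zero.mp (by rwa [leadingCoeff, h])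
    simp [this] at h
  rw [natDegree_divX_eq_natDegree_tsub_one]
  omega

lemma exists_circleTrig_succ_eq_of_coeff_zero_ne_zero {N : ℕ} {L : ℂ[X]}
    (hdeg : L.natDegree ≤ 2 * (N + 1)) (hL : ∀ θ, 0 ≤ circleTrig (N + 1) L θ)
    (h0 : L.coeff 0 ≠ 0) :
    ∃ w : ℂ, ∃ M : ℂ[X], M.natDegree ≤ 2 * N ∧ (∀ θ, 0 ≤ circleTrig N M θ) ∧
      ∀ θ, circleTrig (N + 1) L θ = normSq (cexp (θ * I) - w) * circleTrig N M θ := by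
  have hL0 : L ≠ 0 := fun h => h0 (by simp [h])
  have hdeg' : L.natDegree = 2 * (N + 1) := by
    refine le_antisymm hdeg (le_natDegree_of_ne_zero ?_)
    rw [coeff_two_mul_eq_conj_coeff_zero hdeg hL]
    exact (_root_.map_ne_zero _).mpr h0
  obtain ⟨w, hw⟩ := Complex.exists_root (f := L)
    (by rw [degree_eq_natDegree hL0, hdeg']; norm_cast; omega)
  have hw0 : w ≠ 0 := by
    rintro rfl
    exact h0 (by rwa [coeff_zero_eq_eval_zero])
  obtain ⟨K, rfl⟩ := X_sub_C_mul_X_sub_C_conj_inv_dvd hL0 hdeg hL hw hw0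
  have hfac := circleTrig_X_sub_C_mul_X_sub_C_mul hw0 N K
  refine ⟨w, C (-(conj w)⁻¹) * K, ?_, ?_, hfac⟩
  · have hK0 : K ≠ 0 := right_ne_zero_of_mul hL0
    rw [natDegree_mul (left_ne_zero_of_mul hL0) hK0, natDegree_mul (X_sub_C_ne_zero _)
      (X_sub_C_ne_zero _), natDegree_X_sub_C, natDegree_X_sub_C] at hdeg'
    exact (natDegree_C_mul_le _ _).trans (by omega)
  · refine nonneg_of_forall_exp_mul_I_ne (w := w) (continuous_circleTrig N _) fun θ hθ => ?_
    have hpos : 0 < normSq (cexp (θ * I) - w) := normSq_pos.mpr (sub_ne_zero.mpr hθ)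
    rw [← inv_mul_cancel_left₀ (ofReal_ne_zero.mpr hpos.ne') (circleTrig N _ θ), ← hfac,
      ← ofReal_inv]
    exact mul_nonneg (zero_le_real.mpr (inv_nonneg.mpr hpos.le)) (hL θ)

lemma exists_circleTrig_succ_eq_normSq_mul {N : ℕ} {L : ℂ[X]} (hdeg : L.natDegree ≤ 2 * (N + 1))
    (hL : ∀ θ, 0 ≤ circleTrig (N + 1) L θ) :
    ∃ r M : ℂ[X], r.natDegree ≤ 1 ∧ M.natDegree ≤ 2 * N ∧ (∀ θ, 0 ≤ circleTrig N M θ) ∧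
      ∀ θ, circleTrig (N + 1) L θ = normSq (r.eval (cexp (θ * I))) * circleTrig N M θ := by
  by_cases h0 : L.coeff 0 = 0
  · have hXL : X * L.divX = L := by simpa [h0] using X_mul_divX_add L
    have hX : circleTrig (N + 1) L = circleTrig N L.divX := funext fun θ => by
      rw [← circleTrig_X_mul N L.divX θ, hXL]
    refine ⟨X, L.divX, natDegree_X_le, natDegree_divX_le_of_coeff_zero_eq_zero hdeg hL h0,
      hX ▸ hL, fun θ => ?_⟩
    rw [hX, eval_X, normSq_eq_norm_sq, norm_exp_ofReal_mul_I, one_pow, ofReal_one, one_mul]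
  · obtain ⟨w, M, hM, hMpos, hfac⟩ := exists_circleTrig_succ_eq_of_coeff_zero_ne_zero hdeg hL h0
    exact ⟨X - C w, M, (natDegree_X_sub_C w).le, hM, hMpos, by simpa using hfac⟩

theorem exists_circleTrig_eq_normSq (N : ℕ) {L : ℂ[X]} (hdeg : L.natDegree ≤ 2 * N)
    (hL : ∀ θ, 0 ≤ circleTrig N L θ) :
    ∃ q : ℂ[X], q.natDegree ≤ N ∧ ∀ θ, circleTrig N L θ = normSq (q.eval (cexp (θ * I))) := by
  induction N generalizing L with
  | zero =>
    have hconst : ∀ θ, circleTrig 0 L θ = L.coeff 0 := fun θ => by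
      rw [circleTrig, eq_C_of_natDegree_le_zero hdeg, eval_C, pow_zero, mul_one, coeff_C_zero]
    have hc := hL 0
    rw [hconst] at hc
    refine ⟨C (Real.sqrt (L.coeff 0).re : ℂ), by simp, fun θ => ?_⟩
    rw [hconst, eval_C, normSq_ofReal, Real.mul_self_sqrt (le_def.mp hc).1]
    exact (conj_eq_iff_re.mp hc.isSelfAdjoint.star_eq).symm
  | succ N ih =>
    obtain ⟨r, M, hr, hM, hMpos, hfac⟩ := exists_circleTrig_succ_eq_normSq_mul hdeg hL
    obtain ⟨q, hq, hqM⟩ := ih hM hMpos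
    refine ⟨r * q, natDegree_mul_le.trans (by omega), fun θ => ?_⟩
    rw [hfac, hqM, eval_mul, normSq_mul, ofReal_mul]

lemma IsTrigPolyDeg.exists_circleTrig_eq {N : ℕ} {P : ℝ → ℝ} (hP : IsTrigPolyDeg N P) :
    ∃ L : ℂ[X], L.natDegree ≤ 2 * N ∧ ∀ θ, circleTrig N L θ = P θ := by
  obtain ⟨a, b, hab⟩ := hP
  refine ⟨C (a 0 : ℂ) * X ^ N + ∑ k ∈ Icc 1 N, (C ((a k + b k * I) / 2) * X ^ (N - k) +
    C ((a k - b k * I) / 2) * X ^ (N + k)), ?_, fun θ => ?_⟩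
  · refine natDegree_add_le_of_degree_le (natDegree_C_mul_X_pow_le _ _ |>.trans (by omega))
      (natDegree_sum_le_of_forall_le _ _ fun k hk => natDegree_add_le_of_degree_le
        (natDegree_C_mul_X_pow_le _ _ |>.trans (by omega))
        (natDegree_C_mul_X_pow_le _ _ |>.trans (by simp at hk; omega)))
  · simp only [circleTrig_add, circleTrig_sum, circleTrig_C_mul_X_pow, hab θ, sub_self, zero_mul,
      ofReal_zero, Complex.exp_zero, mul_one, ofReal_add, ofReal_sum]
    congr 1
    refine sum_congr rfl fun k hk => ?_
    rw [Nat.cast_sub (mem_Icc.mp hk).2, Nat.cast_add, sub_sub_cancel_left, add_sub_cancel_left,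
      neg_mul, Complex.exp_mul_I, Complex.exp_mul_I]
    push_cast
    rw [Complex.cos_neg, Complex.sin_neg]
    linear_combination (-(b k : ℂ) * Complex.sin (k * θ)) * I_sq

lemma Matrix.star_dotProduct_vecMulVec_mulVec {R n : Type*} [CommSemiring R] [StarRing R]
    [Fintype n] (b u : n → R) :
    star u ⬝ᵥ (vecMulVec b (star b) *ᵥ u) = star (star b ⬝ᵥ u) * (star b ⬝ᵥ u) := by
  rw [vecMulVec_mulVec, op_smul_eq_smul, dotProduct_smul, star_dotProduct u b, smul_eq_mul,
    mul_comm]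

lemma coeff_dotProduct_Urot_mulVec_psiUnif {N : ℕ} {q : ℂ[X]} (hq : q.natDegree ≤ N) (θ : ℝ) :
    (fun k : Fin (N + 1) => q.coeff k) ⬝ᵥ (Urot N θ *ᵥ psiUnif N) =
      cexp ((-(N / 2 * θ) : ℝ) * I) / √(N + 1) * q.eval (cexp (θ * I)) := by
  rw [eval_eq_sum_range' (Nat.lt_succ_of_le hq), ← Fin.sum_univ_eq_sum_range, mul_sum]
  refine sum_congr rfl fun k _ => ?_
  have hphase : cexp (I * ((k - N / 2 : ℝ) : ℂ) * θ) =
      cexp ((-(N / 2 * θ) : ℝ) * I) * cexp (θ * I) ^ (k : ℕ) := by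
    rw [← Complex.exp_nat_mul, ← Complex.exp_add]
    push_cast
    ring_nf
  simp only [Urot, psiUnif, mulVec_diagonal, hphase]
  push_cast
  ring

lemma normSq_coeff_dotProduct_Urot_mulVec_psiUnif {N : ℕ} {q : ℂ[X]} (hq : q.natDegree ≤ N)
    (θ : ℝ) : normSq ((fun k : Fin (N + 1) => q.coeff k) ⬝ᵥ (Urot N θ *ᵥ psiUnif N)) =
      normSq (q.eval (cexp (θ * I))) / (N + 1) := by
  rw [coeff_dotProduct_Urot_mulVec_psiUnif hq, normSq_mul, normSq_div, normSq_eq_norm_sq (cexp _),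
    norm_exp_ofReal_mul_I, normSq_ofReal, Real.mul_self_sqrt (by positivity)]
  ring

/-- Every `P ∈ R_J` (a real trigonometric polynomial of degree at most `2J` with values in
`[0,1]`; here `N = 2J`) can be written as `P(θ) = ⟨ψ| U_θ† E₊ U_θ |ψ⟩` for a positive
semidefinite matrix `E₊` on `ℂ^{2J+1}`, which moreover can be chosen of rank one,
`E₊ = (2J+1) |b⟩⟨b|`. -/
theorem stmt17 (N : ℕ) (P : ℝ → ℝ) (hP : IsTrigPolyDeg N P)
    (hb : ∀ θ : ℝ, P θ ∈ Set.Icc (0 : ℝ) 1) :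
    ∃ Ep : Matrix (Fin (N + 1)) (Fin (N + 1)) ℂ, Ep.PosSemidef ∧
      (∃ b : Fin (N + 1) → ℂ, Ep = ((N : ℂ) + 1) • Matrix.vecMulVec b (star b)) ∧
      ∀ θ : ℝ, (P θ : ℂ) =
        dotProduct (star (Matrix.mulVec (Urot N θ) (psiUnif N)))
          (Matrix.mulVec Ep (Matrix.mulVec (Urot N θ) (psiUnif N))) := by
  obtain ⟨L, hLdeg, hLP⟩ := hP.exists_circleTrig_eq
  obtain ⟨q, hq, hqL⟩ := exists_circleTrig_eq_normSq N hLdeg fun θ => by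
    rw [hLP]
    exact zero_le_real.mpr (hb θ).1
  set b : Fin (N + 1) → ℂ := star fun k => q.coeff k
  refine ⟨((N : ℂ) + 1) • vecMulVec b (star b), ?_, ⟨b, rfl⟩, fun θ => ?_⟩
  · exact (posSemidef_vecMulVec_self_star b).smul (by norm_cast; positivity)
  · rw [smul_mulVec, dotProduct_smul, star_dotProduct_vecMulVec_mulVec, star_star, ← hLP, hqL,
      smul_eq_mul, Complex.star_def, ← normSq_eq_conj_mul_self,
      normSq_coeff_dotProduct_Urot_mulVec_psiUnif hq]
    push_cast
    field_simp
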